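/- arXiv:2212.10208 — 2 statements merged into one kernel-verified Lean document; each statement's English description precedes it below -/
import Mathlib

section
/- Let L be a finite ordered set, S an interval of L, and θ = θ_S the 1-generated interval relation. Then the order ≤_θ on L/θ (defined by [x]θ ≤_θ [y]θ iff x_θ ≤ y^θ or (x ∈ S↓ and y ∈ S↑)) is the smallest partial order on L/θ such that the quotient map φ : L → L/θ, x ↦ [x]θ, is surjective and order-preserving. -/
open Classical

variable {L : Type*}

/-- The interval relation `θ_S` for the single interval `S = [u,v]`. -/
def irel [Preorder L] (u v : L) (x y : L) : Prop :=
  x = y ∨ (x ∈ Set.Icc u v ∧ y ∈ Set.Icc u v)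

/-- `θ_S` as a setoid. -/
def irelSetoid [Preorder L] (u v : L) : Setoid L where
  r := irel u v
  iseqv := by
    constructor
    · intro x; exact Or.inl rfl
    · rintro x y (rfl | ⟨hx, hy⟩)
      · exact Or.inl rfl
      · exact Or.inr ⟨hy, hx⟩
    · rintro x y z (rfl | ⟨hx, hy⟩) h
      · exact h
      · rcases h with rfl | ⟨hy', hz⟩
        · exact Or.inr ⟨hx, hy⟩
        · exact Or.inr ⟨hx, hz⟩

/-- `x_θ`, the least element of the class of `x`. -/
noncomputable def ilow [Preorder L] (u v : L) (x : L) : L :=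
  if x ∈ Set.Icc u v then u else x

/-- `x^θ`, the greatest element of the class of `x`. -/
noncomputable def ihigh [Preorder L] (u v : L) (x : L) : L :=
  if x ∈ Set.Icc u v then v else x

/-- `S↓`, the elements outside `S` strictly below some element of `S`. -/
def iSdown [Preorder L] (u v : L) : Set L :=
  {z | z ∉ Set.Icc u v ∧ ∃ s ∈ Set.Icc u v, z < s}

/-- `S↑`, the elements outside `S` strictly above some element of `S`. -/
def iSupSet [Preorder L] (u v : L) : Set L :=
  {z | z ∉ Set.Icc u v ∧ ∃ s ∈ Set.Icc u v, s < z}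

/-- `S∥`, the elements outside `S` incomparable to all of `S`. -/
def iSpar [Preorder L] (u v : L) : Set L :=
  {z | z ∉ Set.Icc u v ∧ ∀ s ∈ Set.Icc u v, ¬ s < z ∧ ¬ z < s}

/-- The relation `≤_θ` on representatives. -/
def ile [Preorder L] (u v : L) (x y : L) : Prop :=
  ilow u v x ≤ ihigh u v y ∨ (x ∈ iSdown u v ∧ y ∈ iSupSet u v)

/-- The induced relation `≤_θ` on the factor set `L/θ`. -/
def iLeQ [Preorder L] (u v : L) (a b : Quotient (irelSetoid u v)) : Prop :=
  ∃ x y : L, a = Quotient.mk (irelSetoid u v) x ∧ b = Quotient.mk (irelSetoid u v) y ∧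
    ile u v x y

/-- `S` is a nested interval. -/
def iNested [Lattice L] (u v : L) : Prop :=
  ∃ x y a w : L, x ∈ iSpar u v ∧ y ∈ iSpar u v ∧ a ∈ iSupSet u v ∧ w ∈ iSdown u v ∧
    y = x ⊔ w ∧ x = y ⊓ a ∧ ¬ y ≤ a ∧ ¬ w ≤ x


section Aux

variable {L : Type*} [PartialOrder L] {u v : L}

lemma irel_eq_of_not_mem {x y : L} (h : irel u v x y) (hx : x ∉ Set.Icc u v) : x = y := by
  rcases h with rfl | ⟨h1, _⟩
  · rfl
  · exact absurd h1 hx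

lemma ilow_eq_of_rel {x y : L} (h : irel u v x y) : ilow u v x = ilow u v y := by
  rcases h with rfl | ⟨hx, hy⟩
  · rfl
  · simp [ilow, hx, hy]

lemma ihigh_eq_of_rel {x y : L} (h : irel u v x y) : ihigh u v x = ihigh u v y := by
  rcases h with rfl | ⟨hx, hy⟩
  · rfl
  · simp [ihigh, hx, hy]

lemma ile_wd {x x' y y' : L} (hx : irel u v x x') (hy : irel u v y y')
    (h : ile u v x y) : ile u v x' y' := by
  rcases h with h | ⟨h1, h2⟩
  · left; rw [← ilow_eq_of_rel hx, ← ihigh_eq_of_rel hy]; exact h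
  · right
    rw [← irel_eq_of_not_mem hx h1.1, ← irel_eq_of_not_mem hy h2.1]
    exact ⟨h1, h2⟩

lemma ilow_le_self (x : L) : ilow u v x ≤ x := by
  unfold ilow; split_ifs with h
  · exact h.1
  · exact le_rfl

lemma le_ihigh_self (x : L) : x ≤ ihigh u v x := by
  unfold ihigh; split_ifs with h
  · exact h.2
  · exact le_rfl

lemma ile_refl (x : L) : ile u v x x :=
  Or.inl (le_trans (ilow_le_self x) (le_ihigh_self x))

lemma ile_of_le {x y : L} (h : x ≤ y) : ile u v x y :=
  Or.inl (le_trans (ilow_le_self x) (le_trans h (le_ihigh_self y)))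

lemma ile_trans (huv : u ≤ v) {x y z : L} (h1 : ile u v x y) (h2 : ile u v y z) :
    ile u v x z := by
  rcases h1 with h1 | ⟨hxd, hyu⟩
  · rcases h2 with h2 | ⟨hyd, hzu⟩
    · by_cases hy : y ∈ Set.Icc u v
      · rw [show ihigh u v y = v from if_pos hy] at h1
        rw [show ilow u v y = u from if_pos hy] at h2
        by_cases hx : x ∈ Set.Icc u v
        · left; rw [show ilow u v x = u from if_pos hx]; exact h2
        · rw [show ilow u v x = x from if_neg hx] at h1
          by_cases hz : z ∈ Set.Icc u v
          · left
            rw [show ilow u v x = x from if_neg hx, show ihigh u v z = v from if_pos hz]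
            exact h1
          · rw [show ihigh u v z = z from if_neg hz] at h2
            right
            refine ⟨⟨hx, v, ⟨huv, le_rfl⟩, lt_of_le_of_ne h1 ?_⟩,
              ⟨hz, u, ⟨le_rfl, huv⟩, lt_of_le_of_ne h2 ?_⟩⟩
            · rintro rfl; exact hx ⟨huv, le_rfl⟩
            · rintro rfl; exact hz ⟨le_rfl, huv⟩
      · left
        rw [show ihigh u v y = y from if_neg hy] at h1
        rw [show ilow u v y = y from if_neg hy] at h2
        exact le_trans h1 h2
    · obtain ⟨hy, s, hs, hys⟩ := hyd
      rw [show ihigh u v y = y from if_neg hy] at h1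
      by_cases hx : x ∈ Set.Icc u v
      · left
        obtain ⟨hz, t, ht, htz⟩ := hzu
        rw [show ilow u v x = u from if_pos hx, show ihigh u v z = z from if_neg hz]
        exact le_trans ht.1 htz.le
      · rw [show ilow u v x = x from if_neg hx] at h1
        exact Or.inr ⟨⟨hx, s, hs, lt_of_le_of_lt h1 hys⟩, hzu⟩
  · rcases h2 with h2 | ⟨hyd, hzu⟩
    · obtain ⟨hy, s, hs, hsy⟩ := hyu
      rw [show ilow u v y = y from if_neg hy] at h2
      by_cases hz : z ∈ Set.Icc u v
      · rw [show ihigh u v z = v from if_pos hz] at h2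
        exact absurd ⟨le_trans hs.1 hsy.le, h2⟩ hy
      · rw [show ihigh u v z = z from if_neg hz] at h2
        exact Or.inr ⟨hxd, hz, s, hs, lt_of_lt_of_le hsy h2⟩
    · exact Or.inr ⟨hxd, hzu⟩

lemma ile_antisymm (huv : u ≤ v) {x y : L} (h1 : ile u v x y) (h2 : ile u v y x) :
    irel u v x y := by
  rcases h1 with h1 | ⟨hxd, hyu⟩
  · rcases h2 with h2 | ⟨hyd, hxu⟩
    · by_cases hx : x ∈ Set.Icc u v <;> by_cases hy : y ∈ Set.Icc u v
      · exact Or.inr ⟨hx, hy⟩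
      · rw [show ihigh u v y = y from if_neg hy] at h1
        rw [show ilow u v x = u from if_pos hx] at h1
        rw [show ilow u v y = y from if_neg hy] at h2
        rw [show ihigh u v x = v from if_pos hx] at h2
        exact absurd ⟨h1, h2⟩ hy
      · rw [show ihigh u v y = v from if_pos hy] at h1
        rw [show ilow u v x = x from if_neg hx] at h1
        rw [show ilow u v y = u from if_pos hy] at h2
        rw [show ihigh u v x = x from if_neg hx] at h2
        exact absurd ⟨h2, h1⟩ hx
      · rw [show ihigh u v y = y from if_neg hy, show ilow u v x = x from if_neg hx] at h1
        rw [show ilow u v y = y from if_neg hy, show ihigh u v x = x from if_neg hx] at h2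
        exact Or.inl (le_antisymm h1 h2)
    · obtain ⟨hy, s, hs, hys⟩ := hyd
      obtain ⟨hx, t, ht, htx⟩ := hxu
      rw [show ihigh u v y = y from if_neg hy, show ilow u v x = x from if_neg hx] at h1
      exact absurd ⟨le_trans ht.1 (le_trans htx.le h1), hys.le.trans hs.2⟩ hy
  · rcases h2 with h2 | ⟨hyd, hxu⟩
    · obtain ⟨hy, s, hs, hsy⟩ := hyu
      obtain ⟨hx, t, ht, hxt⟩ := hxd
      rw [show ilow u v y = y from if_neg hy, show ihigh u v x = x from if_neg hx] at h2
      exact absurd ⟨le_trans hs.1 hsy.le, le_trans h2 (hxt.le.trans ht.2)⟩ hy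
    · obtain ⟨hx, s, hs, hxs⟩ := hxd
      obtain ⟨hx', t, ht, htx⟩ := hxu
      exact absurd ⟨le_trans ht.1 htx.le, le_trans hxs.le hs.2⟩ hx

end Aux

/-- `≤_θ` is the smallest partial order on `L/θ_S` making the quotient map
surjective and order-preserving. -/
theorem leTheta_smallest {L : Type*} [PartialOrder L] [Finite L] (u v : L) (huv : u ≤ v) :
    (Reflexive (iLeQ u v) ∧ Transitive (iLeQ u v) ∧
      (∀ a b : Quotient (irelSetoid u v), iLeQ u v a b → iLeQ u v b a → a = b) ∧
      Function.Surjective (Quotient.mk (irelSetoid u v)) ∧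
      (∀ x y : L, x ≤ y →
        iLeQ u v (Quotient.mk (irelSetoid u v) x) (Quotient.mk (irelSetoid u v) y))) ∧
    (∀ R : Quotient (irelSetoid u v) → Quotient (irelSetoid u v) → Prop,
      Reflexive R → Transitive R → (∀ a b, R a b → R b a → a = b) →
      (∀ x y : L, x ≤ y → R (Quotient.mk (irelSetoid u v) x) (Quotient.mk (irelSetoid u v) y)) →
      ∀ a b, iLeQ u v a b → R a b) := by
  have mk_low : ∀ x : L, Quotient.mk (irelSetoid u v) (ilow u v x)
      = Quotient.mk (irelSetoid u v) x := by
    intro x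
    apply Quotient.sound
    show irel u v (ilow u v x) x
    unfold ilow; split_ifs with h
    · exact Or.inr ⟨⟨le_rfl, huv⟩, h⟩
    · exact Or.inl rfl
  have mk_high : ∀ x : L, Quotient.mk (irelSetoid u v) (ihigh u v x)
      = Quotient.mk (irelSetoid u v) x := by
    intro x
    apply Quotient.sound
    show irel u v (ihigh u v x) x
    unfold ihigh; split_ifs with h
    · exact Or.inr ⟨⟨huv, le_rfl⟩, h⟩
    · exact Or.inl rfl
  refine ⟨⟨?_, ?_, ?_, ?_, ?_⟩, ?_⟩
  · -- reflexive
    intro a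
    obtain ⟨x, rfl⟩ := Quotient.exists_rep a
    exact ⟨x, x, rfl, rfl, ile_refl x⟩
  · -- transitive
    rintro a b c ⟨x, y, rfl, rfl, hxy⟩ ⟨y', z, hy', rfl, hyz⟩
    have hrel : irel u v y y' := Quotient.exact hy'
    exact ⟨x, z, rfl, rfl, ile_trans huv hxy
      (ile_wd ((irelSetoid u v).symm hrel) (Or.inl rfl) hyz)⟩
  · -- antisymmetric
    rintro a b ⟨x, y, rfl, rfl, hxy⟩ ⟨y', x', hy', hx', hyx⟩
    have hrely : irel u v y y' := Quotient.exact hy'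
    have hrelx : irel u v x x' := Quotient.exact hx'
    have hyx' : ile u v y x :=
      ile_wd ((irelSetoid u v).symm hrely)
        ((irelSetoid u v).symm hrelx) hyx
    exact Quotient.sound (ile_antisymm huv hxy hyx')
  · -- surjective
    intro a
    exact Quotient.exists_rep a
  · -- order-preserving
    intro x y h
    exact ⟨x, y, rfl, rfl, ile_of_le h⟩
  · -- smallest
    rintro R hrefl htrans hanti hmono a b ⟨x, y, rfl, rfl, hxy⟩
    rcases hxy with h | ⟨⟨hx, s, hs, hxs⟩, ⟨hy, t, ht, hty⟩⟩
    · have := hmono _ _ h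
      rwa [mk_low, mk_high] at this
    · have h1 : R (Quotient.mk (irelSetoid u v) x) (Quotient.mk (irelSetoid u v) s) :=
        hmono _ _ hxs.le
      have h2 : R (Quotient.mk (irelSetoid u v) t) (Quotient.mk (irelSetoid u v) y) :=
        hmono _ _ hty.le
      have hst : Quotient.mk (irelSetoid u v) s = Quotient.mk (irelSetoid u v) t :=
        Quotient.sound (Or.inr ⟨hs, ht⟩)
      exact htrans h1 (hst ▸ h2)
end

section
/- Let L be a finite ordered set and θ an interval relation on L. Then the relation ≤_θ on L/θ is the transitive closure of the relation ≤* defined by [x]θ ≤* [y]θ iff x_θ ≤ y^θ. -/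
open Classical

variable {L : Type*}

/-- The interval relation `θ_{S₁,…,Sₖ}` for the pairwise disjoint intervals
`Sᵢ = [u i, v i]`. -/
def mrel [Preorder L] {k : ℕ} (u v : Fin k → L) (x y : L) : Prop :=
  x = y ∨ ∃ i, x ∈ Set.Icc (u i) (v i) ∧ y ∈ Set.Icc (u i) (v i)

/-- `θ_{S₁,…,Sₖ}` as a setoid (the intervals must be pairwise disjoint). -/
def mrelSetoid [Preorder L] {k : ℕ} (u v : Fin k → L)
    (hdisj : Pairwise fun i j => Disjoint (Set.Icc (u i) (v i)) (Set.Icc (u j) (v j))) :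
    Setoid L where
  r := mrel u v
  iseqv := by
    constructor
    · intro x; exact Or.inl rfl
    · rintro x y (rfl | ⟨i, hx, hy⟩)
      · exact Or.inl rfl
      · exact Or.inr ⟨i, hy, hx⟩
    · rintro x y z (rfl | ⟨i, hx, hy⟩) h
      · exact h
      · rcases h with rfl | ⟨j, hy', hz⟩
        · exact Or.inr ⟨i, hx, hy⟩
        · rcases eq_or_ne i j with rfl | hij
          · exact Or.inr ⟨i, hx, hz⟩
          · exact ((Set.disjoint_left.mp (hdisj hij) hy) hy').elim

/-- `x_θ`, the least element of the class of `x`. -/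
noncomputable def mlow [Preorder L] {k : ℕ} (u v : Fin k → L) (x : L) : L :=
  if h : ∃ i, x ∈ Set.Icc (u i) (v i) then u (Classical.choose h) else x

/-- `x^θ`, the greatest element of the class of `x`. -/
noncomputable def mhigh [Preorder L] {k : ℕ} (u v : Fin k → L) (x : L) : L :=
  if h : ∃ i, x ∈ Set.Icc (u i) (v i) then v (Classical.choose h) else x

/-- `Sᵢ↓`, the elements outside `Sᵢ` strictly below some element of `Sᵢ`. -/
def mSdown [Preorder L] {k : ℕ} (u v : Fin k → L) (i : Fin k) : Set L :=
  {z | z ∉ Set.Icc (u i) (v i) ∧ ∃ s ∈ Set.Icc (u i) (v i), z < s}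

/-- `Sᵢ↑`, the elements outside `Sᵢ` strictly above some element of `Sᵢ`. -/
def mSup [Preorder L] {k : ℕ} (u v : Fin k → L) (i : Fin k) : Set L :=
  {z | z ∉ Set.Icc (u i) (v i) ∧ ∃ s ∈ Set.Icc (u i) (v i), s < z}

/-- The relation `≤_θ` on representatives: `x_θ ≤ y^θ` or a chain of intervals connects
the class of `x` to the class of `y` through the intervals' strict down- and up-sets. -/
def mle [Preorder L] {k : ℕ} (u v : Fin k → L) (x y : L) : Prop :=
  mlow u v x ≤ mhigh u v y ∨
    ∃ (n : ℕ) (c : Fin (n + 1) → Fin k),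
      mlow u v x ∈ mSdown u v (c 0) ∧
      (∀ j : Fin n, u (c j.castSucc) ∈ mSdown u v (c j.succ)) ∧
      mhigh u v y ∈ mSup u v (c (Fin.last n))

/-- The induced relation `≤_θ` on the factor set `L/θ`. -/
def mLeQ [Preorder L] {k : ℕ} (u v : Fin k → L)
    (hdisj : Pairwise fun i j => Disjoint (Set.Icc (u i) (v i)) (Set.Icc (u j) (v j)))
    (a b : Quotient (mrelSetoid u v hdisj)) : Prop :=
  ∃ x y : L, a = Quotient.mk (mrelSetoid u v hdisj) x ∧
    b = Quotient.mk (mrelSetoid u v hdisj) y ∧ mle u v x y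


section Aux

variable [PartialOrder L] {k : ℕ} {u v : Fin k → L}

lemma mem_unique (hdisj : Pairwise fun i j => Disjoint (Set.Icc (u i) (v i)) (Set.Icc (u j) (v j)))
    {x : L} {i j : Fin k} (hi : x ∈ Set.Icc (u i) (v i)) (hj : x ∈ Set.Icc (u j) (v j)) :
    i = j := by
  by_contra h
  exact (Set.disjoint_left.mp (hdisj h) hi) hj

lemma mlow_eq (hdisj : Pairwise fun i j => Disjoint (Set.Icc (u i) (v i)) (Set.Icc (u j) (v j)))
    {x : L} {i : Fin k} (hx : x ∈ Set.Icc (u i) (v i)) : mlow u v x = u i := by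
  have h : ∃ i, x ∈ Set.Icc (u i) (v i) := ⟨i, hx⟩
  rw [mlow, dif_pos h]
  exact congrArg u (mem_unique hdisj (Classical.choose_spec h) hx)

lemma mhigh_eq (hdisj : Pairwise fun i j => Disjoint (Set.Icc (u i) (v i)) (Set.Icc (u j) (v j)))
    {x : L} {i : Fin k} (hx : x ∈ Set.Icc (u i) (v i)) : mhigh u v x = v i := by
  have h : ∃ i, x ∈ Set.Icc (u i) (v i) := ⟨i, hx⟩
  rw [mhigh, dif_pos h]
  exact congrArg v (mem_unique hdisj (Classical.choose_spec h) hx)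

lemma mlow_eq' {x : L} (hx : ¬ ∃ i, x ∈ Set.Icc (u i) (v i)) : mlow u v x = x :=
  dif_neg hx

lemma mhigh_eq' {x : L} (hx : ¬ ∃ i, x ∈ Set.Icc (u i) (v i)) : mhigh u v x = x :=
  dif_neg hx

lemma mem_self_Icc (hIcc : ∀ i, u i ≤ v i) (i : Fin k) : u i ∈ Set.Icc (u i) (v i) :=
  ⟨le_refl _, hIcc i⟩

lemma mem_self_Icc' (hIcc : ∀ i, u i ≤ v i) (i : Fin k) : v i ∈ Set.Icc (u i) (v i) :=
  ⟨hIcc i, le_refl _⟩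

/-- If `x_θ` lies in the interval `Sᵢ` then `x_θ = u i`. -/
lemma mlow_mem (hIcc : ∀ i, u i ≤ v i)
    (hdisj : Pairwise fun i j => Disjoint (Set.Icc (u i) (v i)) (Set.Icc (u j) (v j)))
    {x : L} {i : Fin k} (hx : mlow u v x ∈ Set.Icc (u i) (v i)) : mlow u v x = u i := by
  by_cases h : ∃ j, x ∈ Set.Icc (u j) (v j)
  · obtain ⟨j, hxj⟩ := h
    rw [mlow_eq hdisj hxj] at hx ⊢
    exact congrArg u (mem_unique hdisj (mem_self_Icc hIcc j) hx)
  · rw [mlow_eq' h] at hx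
    exact absurd ⟨i, hx⟩ h

/-- If `x^θ` lies in the interval `Sᵢ` then `x^θ = v i`. -/
lemma mhigh_mem (hIcc : ∀ i, u i ≤ v i)
    (hdisj : Pairwise fun i j => Disjoint (Set.Icc (u i) (v i)) (Set.Icc (u j) (v j)))
    {x : L} {i : Fin k} (hx : mhigh u v x ∈ Set.Icc (u i) (v i)) : mhigh u v x = v i := by
  by_cases h : ∃ j, x ∈ Set.Icc (u j) (v j)
  · obtain ⟨j, hxj⟩ := h
    rw [mhigh_eq hdisj hxj] at hx ⊢
    exact congrArg v (mem_unique hdisj (mem_self_Icc' hIcc j) hx)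
  · rw [mhigh_eq' h] at hx
    exact absurd ⟨i, hx⟩ h

/-- The key step: `mle` absorbs one more `≤*`-step on the right. -/
lemma mle_step (hIcc : ∀ i, u i ≤ v i)
    (hdisj : Pairwise fun i j => Disjoint (Set.Icc (u i) (v i)) (Set.Icc (u j) (v j)))
    {x b z : L} (hxb : mle u v x b) (hbz : mlow u v b ≤ mhigh u v z) : mle u v x z := by
  rcases hxb with h | ⟨n, c, h0, hmid, hlast⟩
  · -- Base: `mlow x ≤ mhigh b`.
    by_cases hb : ∃ i, b ∈ Set.Icc (u i) (v i)
    · obtain ⟨i, hbi⟩ := hb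
      rw [mhigh_eq hdisj hbi] at h
      rw [mlow_eq hdisj hbi] at hbz
      by_cases hx' : mlow u v x ∈ Set.Icc (u i) (v i)
      · exact Or.inl ((mlow_mem hIcc hdisj hx').le.trans hbz)
      · have hsd : mlow u v x ∈ mSdown u v i :=
          ⟨hx', v i, mem_self_Icc' hIcc i,
            lt_of_le_of_ne h (fun e => hx' (e ▸ mem_self_Icc' hIcc i))⟩
        by_cases hz' : mhigh u v z ∈ Set.Icc (u i) (v i)
        · exact Or.inl ((mhigh_mem hIcc hdisj hz') ▸ h)
        · have hsup : mhigh u v z ∈ mSup u v i :=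
            ⟨hz', u i, mem_self_Icc hIcc i,
              lt_of_le_of_ne hbz (fun e => hz' (e ▸ mem_self_Icc hIcc i))⟩
          exact Or.inr ⟨0, fun _ => i, hsd, fun j => j.elim0, hsup⟩
    · rw [mhigh_eq' hb] at h
      rw [mlow_eq' hb] at hbz
      exact Or.inl (h.trans hbz)
  · -- Chain case.
    obtain ⟨hbnot, s, hs, hsb⟩ := hlast
    by_cases hz' : mhigh u v z ∈ Set.Icc (u (c (Fin.last n))) (v (c (Fin.last n)))
    · -- `mhigh z = v (c last)`: shorten the chain.
      have hzv : mhigh u v z = v (c (Fin.last n)) := mhigh_mem hIcc hdisj hz'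
      rcases n with _ | m
      · -- chain of length 1: base case.
        obtain ⟨hx0, s', hs', hxs'⟩ := h0
        exact Or.inl (le_of_lt (lt_of_lt_of_le hxs' (hzv ▸ hs'.2)))
      · -- drop the last interval.
        refine Or.inr ⟨m, fun j => c j.castSucc, h0, ?_, ?_⟩
        · intro j
          have := hmid j.castSucc
          rwa [Fin.succ_castSucc] at this
        · obtain ⟨hnot', t, ht, hut⟩ := hmid (Fin.last m)
          rw [Fin.succ_last] at hnot' ht
          refine ⟨?_, u (c (Fin.last m).castSucc), mem_self_Icc hIcc _, ?_⟩
          · intro hmem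
            have : c (Fin.last m).castSucc = c (Fin.last (m + 1)) :=
              mem_unique hdisj hmem hz'
            rw [this] at hnot'
            exact hnot' (mem_self_Icc hIcc _)
          · exact lt_of_lt_of_le hut (hzv ▸ ht.2)
    · -- `mhigh z ∉ S_{c last}`.
      by_cases hb : ∃ i, b ∈ Set.Icc (u i) (v i)
      · obtain ⟨i, hbi⟩ := hb
        rw [mhigh_eq hdisj hbi] at hbnot hsb
        rw [mlow_eq hdisj hbi] at hbz
        have hine : c (Fin.last n) ≠ i := by
          intro e
          exact hbnot (e ▸ mem_self_Icc' hIcc i)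
        by_cases hzi : mhigh u v z ∈ Set.Icc (u i) (v i)
        · -- `mhigh z = v i = mhigh b`, reuse the chain.
          have hzv : mhigh u v z = v i := mhigh_mem hIcc hdisj hzi
          exact Or.inr ⟨n, c, h0, hmid, ⟨hzv ▸ hbnot, s, hs, hzv ▸ hsb⟩⟩
        · -- extend the chain with `i`.
          have hsup : mhigh u v z ∈ mSup u v i :=
            ⟨hzi, u i, mem_self_Icc hIcc i,
              lt_of_le_of_ne hbz (fun e => hzi (e ▸ mem_self_Icc hIcc i))⟩
          refine Or.inr ⟨n + 1, Fin.snoc c i, ?_, ?_, ?_⟩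
          · rw [show (0 : Fin (n + 2)) = Fin.castSucc 0 from (Fin.castSucc_zero).symm,
              Fin.snoc_castSucc]
            exact h0
          · intro j
            refine Fin.lastCases ?_ ?_ j
            · rw [Fin.snoc_castSucc, Fin.succ_last, Fin.snoc_last]
              refine ⟨?_, v i, mem_self_Icc' hIcc i, ?_⟩
              · intro hmem
                exact hine (mem_unique hdisj (mem_self_Icc hIcc _) hmem)
              · exact lt_of_le_of_lt hs.1 hsb
            · intro j'
              rw [Fin.snoc_castSucc, Fin.succ_castSucc, Fin.snoc_castSucc]
              exact hmid j'
          · rw [Fin.snoc_last]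
            exact hsup
      · -- `b` outside all intervals: `mlow b = mhigh b = b`.
        rw [mhigh_eq' hb] at hbnot hsb
        rw [mlow_eq' hb] at hbz
        exact Or.inr ⟨n, c, h0, hmid, ⟨hz', s, hs, lt_of_lt_of_le hsb hbz⟩⟩

end Aux

/-- `≤_θ` is the transitive closure of the relation
`[x]θ ≤* [y]θ ⟺ x_θ ≤ y^θ`. -/
theorem mle_eq_transGen {L : Type*} [PartialOrder L] [Finite L] {k : ℕ} (u v : Fin k → L)
    (hIcc : ∀ i, u i ≤ v i)
    (hdisj : Pairwise fun i j => Disjoint (Set.Icc (u i) (v i)) (Set.Icc (u j) (v j))) :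
    ∀ x y : L, mle u v x y ↔
      Relation.TransGen (fun a b : L => mlow u v a ≤ mhigh u v b) x y := by
  intro x y
  constructor
  · rintro (h | ⟨n, c, h0, hmid, hlast⟩)
    · exact Relation.TransGen.single h
    · -- build the chain x → u (c 0) → ⋯ → u (c last) → y
      have step0 : mlow u v x ≤ mhigh u v (u (c 0)) := by
        obtain ⟨_, s, hs, hxs⟩ := h0
        rw [mhigh_eq hdisj (mem_self_Icc hIcc (c 0))]
        exact le_of_lt (lt_of_lt_of_le hxs hs.2)
      have stepj : ∀ j : Fin n, mlow u v (u (c j.castSucc)) ≤ mhigh u v (u (c j.succ)) := by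
        intro j
        obtain ⟨_, s, hs, hus⟩ := hmid j
        rw [mlow_eq hdisj (mem_self_Icc hIcc (c j.castSucc)),
          mhigh_eq hdisj (mem_self_Icc hIcc (c j.succ))]
        exact le_of_lt (lt_of_lt_of_le hus hs.2)
      have stepy : mlow u v (u (c (Fin.last n))) ≤ mhigh u v y := by
        obtain ⟨_, s, hs, hsy⟩ := hlast
        rw [mlow_eq hdisj (mem_self_Icc hIcc (c (Fin.last n)))]
        exact le_of_lt (lt_of_le_of_lt hs.1 hsy)
      have key : ∀ j : Fin (n + 1),
          Relation.TransGen (fun a b : L => mlow u v a ≤ mhigh u v b) x (u (c j)) := by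
        intro j
        induction j using Fin.induction with
        | zero => exact Relation.TransGen.single step0
        | succ j' ih => exact ih.tail (stepj j')
      exact (key (Fin.last n)).tail stepy
  · intro h
    induction h with
    | single h => exact Or.inl h
    | tail _ hbz ih => exact mle_step hIcc hdisj ih hbz
end
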